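/- arXiv:1311.2294 — 4 statements merged into one kernel-verified Lean document; each statement's English description precedes it below -/
import Mathlib

section
/- Let n, k be naturals with k < n - k and let L_{k,n} be the level graph. If A, B ∈ [X]^{n-k} with |A ∩ B| = i, then the graph distance satisfies ‖AB‖ ≤ 2⌈(n - k - i)/(n - 2k)⌉. -/
/-- Vertices of the level graph: k-element and (n-k)-element subsets of {1,…,n}. -/
def LevelVert (n k : ℕ) := {A : Finset (Fin n) // A.card = k ∨ A.card = n - k}

/-- The (k,n)-level graph L_{k,n}. -/
def levelGraph (n k : ℕ) : SimpleGraph (LevelVert n k) where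
  Adj A B := A ≠ B ∧
    ((A.1.card = k ∧ B.1.card = n - k ∧ A.1 ⊆ B.1) ∨
     (B.1.card = k ∧ A.1.card = n - k ∧ B.1 ⊆ A.1))
  symm := by constructor; intro A B h; exact ⟨Ne.symm h.1, h.2.elim Or.inr Or.inl⟩
  loopless := by constructor; intro A h; exact h.1 rfl

/-- The initial vertex P = {1,…,k} (as a subset of Fin n). -/
def Pset (n k : ℕ) : Finset (Fin n) := Finset.univ.filter (fun x => (x : ℕ) < k)

/-!
Walk from `A` to `B` through `k`-sets. If `|A ∩ B| < k`, pick a `k`-set `C` with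
`A ∩ B ⊆ C ⊆ A` and go `A — C — A'`, where `A' = C ∪ D` adds `n - 2k` fresh elements `D` of `B`:
two steps raise the intersection with `B` by `n - 2k`. Once `|A ∩ B| ≥ k`, a common `k`-subset
of `A` and `B` joins them in two steps.
-/

open Finset

theorem Finset.eq_of_card_le_card_inter {α : Type*} [DecidableEq α] {s t : Finset α}
    (hts : #t ≤ #s) (h : #s ≤ #(s ∩ t)) : s = t :=
  eq_of_subset_of_card_le
    (inter_eq_left.mp (eq_of_subset_of_card_le inter_subset_left h)) hts

theorem Finset.exists_subset_card_inter_add {α : Type*} [DecidableEq α] {A B : Finset α}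
    {k m : ℕ} (hA : #A = m) (hB : #B = m) (hik : #(A ∩ B) ≤ k) (hkm : k ≤ m) :
    ∃ C A' : Finset α, #C = k ∧ C ⊆ A ∧ C ⊆ A' ∧ #A' = m ∧
      #(A' ∩ B) = #(A ∩ B) + (m - k) := by
  obtain ⟨C, hABC, hCA, hC⟩ :=
    exists_subsuperset_card_eq (inter_subset_left : A ∩ B ⊆ A) hik (hA ▸ hkm)
  have hCB : C ∩ B = A ∩ B :=
    Subset.antisymm (inter_subset_inter_right hCA) (subset_inter hABC inter_subset_right)
  have hBC : #(B \ C) = m - #(A ∩ B) := by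
    have := card_sdiff_add_card_inter B C
    rw [inter_comm, hCB] at this
    omega
  obtain ⟨D, hDBC, hD⟩ := exists_subset_card_eq (s := B \ C) (n := m - k) (by omega)
  have hDB : D ⊆ B := hDBC.trans sdiff_subset
  have hCD : Disjoint C D := disjoint_of_subset_right hDBC disjoint_sdiff
  refine ⟨C, C ∪ D, hC, hCA, subset_union_left, by rw [card_union_of_disjoint hCD]; omega, ?_⟩
  rw [union_inter_distrib_right, hCB, inter_eq_left.mpr hDB,
    card_union_of_disjoint (disjoint_of_subset_left (hCB ▸ inter_subset_left) hCD), hD]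

namespace levelGraph

variable {n k : ℕ}

theorem adj_of_subset (hk : k ≠ n - k) {C A : LevelVert n k} (hC : #C.1 = k)
    (hA : #A.1 = n - k) (hCA : C.1 ⊆ A.1) : (levelGraph n k).Adj C A :=
  ⟨fun h => hk (hC.symm.trans (h ▸ hA)), Or.inl ⟨hC, hA, hCA⟩⟩

theorem exists_walk_length_two_of_subset (hk : k ≠ n - k) {A B : LevelVert n k}
    (hA : #A.1 = n - k) (hB : #B.1 = n - k) {C : Finset (Fin n)} (hC : #C = k)
    (hCA : C ⊆ A.1) (hCB : C ⊆ B.1) : ∃ p : (levelGraph n k).Walk A B, p.length = 2 :=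
  let CV : LevelVert n k := ⟨C, Or.inl hC⟩
  ⟨.cons (adj_of_subset (C := CV) hk hC hA hCA).symm
    (.cons (adj_of_subset (C := CV) hk hC hB hCB) .nil), rfl⟩

theorem exists_walk_length_le (hk : k < n - k) (A B : LevelVert n k)
    (hA : #A.1 = n - k) (hB : #B.1 = n - k) :
    ∃ p : (levelGraph n k).Walk A B,
      p.length ≤ 2 * ((n - k - #(A.1 ∩ B.1) + (n - 2 * k) - 1) / (n - 2 * k)) := by
  induction hm : n - k - #(A.1 ∩ B.1) using Nat.strong_induction_on generalizing A with
  | _ m ih =>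
  have hd : 0 < n - 2 * k := by omega
  by_cases hik : k ≤ #(A.1 ∩ B.1)
  · by_cases hm0 : m = 0
    · have hAB : A = B := Subtype.ext (eq_of_card_le_card_inter (by omega) (by omega))
      subst hAB
      exact ⟨.nil, by simp⟩
    obtain ⟨C, hCAB, hC⟩ := exists_subset_card_eq hik
    obtain ⟨p, hp⟩ := exists_walk_length_two_of_subset hk.ne hA hB hC
      (hCAB.trans inter_subset_left) (hCAB.trans inter_subset_right)
    have : 1 ≤ (m + (n - 2 * k) - 1) / (n - 2 * k) := by
      rw [Nat.le_div_iff_mul_le hd]; omega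
    exact ⟨p, by omega⟩
  · obtain ⟨C, A', hC, hCA, hCA', hA', hA'B⟩ :=
      exists_subset_card_inter_add hA hB (Nat.le_of_not_le hik) hk.le
    let A'V : LevelVert n k := ⟨A', Or.inr hA'⟩
    obtain ⟨p, hp⟩ := exists_walk_length_two_of_subset (B := A'V) hk.ne hA hA' hC hCA hCA'
    obtain ⟨q, hq⟩ := ih (m - (n - 2 * k)) (by omega) A'V hA' (by simp only [A'V]; omega)
    refine ⟨p.append q, ?_⟩
    have hdiv : m + (n - 2 * k) - 1 = (m - (n - 2 * k) + (n - 2 * k) - 1) + (n - 2 * k) := by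
      omega
    rw [SimpleGraph.Walk.length_append, hdiv, Nat.add_div_right _ hd]
    omega

end levelGraph

theorem dist_le_of_card_eq_upper (n k i : ℕ) (hk : k < n - k)
    (A B : LevelVert n k) (hA : A.1.card = n - k) (hB : B.1.card = n - k)
    (hi : (A.1 ∩ B.1).card = i) :
    (levelGraph n k).dist A B ≤ 2 * ((n - k - i + (n - 2 * k) - 1) / (n - 2 * k)) := by
  obtain ⟨p, hp⟩ := levelGraph.exists_walk_length_le hk A B hA hB
  exact hi ▸ (SimpleGraph.dist_le p).trans hp
end

section
/- Let n, k be naturals with k < n - k and let L_{k,n} be the level graph. If A, B ∈ [X]^k with |A ∩ B| = i, then the graph distance satisfies ‖AB‖ ≤ 2⌈(k - i)/(n - 2k)⌉. -/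
open Finset

theorem exists_superset_subset_card_sdiff_le {α : Type*} [Fintype α] [DecidableEq α]
    {A B : Finset α} {m : ℕ} (hBA : #B ≤ #A) (hAm : #A ≤ m) (hm : m ≤ Fintype.card α) :
    ∃ C A' : Finset α, A ⊆ C ∧ #C = m ∧ A' ⊆ C ∧ #A' = #A ∧
      #(B \ A') ≤ #(B \ A) - (m - #A) := by
  obtain ⟨D, hDBA, hD⟩ := exists_subset_card_eq (min_le_right (m - #A) #(B \ A))
  have hAD : #(A ∪ D) ≤ m := by
    have := card_union_le A D
    omega
  obtain ⟨C, hADC, -, hC⟩ := exists_subsuperset_card_eq (subset_univ (A ∪ D)) hAD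
    (by rwa [card_univ])
  have hBC : #(B ∩ C) ≤ #A := (card_le_card inter_subset_left).trans hBA
  obtain ⟨A', hBCA', hA'C, hA'⟩ :=
    exists_subsuperset_card_eq inter_subset_right hBC (by omega)
  refine ⟨C, A', subset_union_left.trans hADC, hC, hA'C, hA', ?_⟩
  have hB_sub : B \ A' ⊆ (B \ A) \ D := by
    intro x hx
    simp only [mem_sdiff] at hx ⊢
    have hxC : x ∉ C := fun hxC => hx.2 (hBCA' (mem_inter.2 ⟨hx.1, hxC⟩))
    exact ⟨⟨hx.1, fun hxA => hxC (hADC (mem_union_left _ hxA))⟩,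
      fun hxD => hxC (hADC (mem_union_right _ hxD))⟩
  calc #(B \ A') ≤ #((B \ A) \ D) := card_le_card hB_sub
    _ = #(B \ A) - (m - #A) := by rw [card_sdiff_of_subset hDBA, hD]; omega

section LevelGraph

variable {n k : ℕ}

theorem levelGraph_adj_of_subset (hk : k < n - k) {A C : LevelVert n k}
    (hA : #A.1 = k) (hC : #C.1 = n - k) (hAC : A.1 ⊆ C.1) : (levelGraph n k).Adj A C :=
  ⟨by rintro rfl; omega, Or.inl ⟨hA, hC, hAC⟩⟩

theorem levelGraph_exists_walk_two (hk : k < n - k) {A : LevelVert n k} (B : LevelVert n k)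
    (hA : #A.1 = k) (hB : #B.1 = k) :
    ∃ A' : LevelVert n k, #A'.1 = k ∧ #(B.1 \ A'.1) ≤ #(B.1 \ A.1) - (n - 2 * k) ∧
      ∃ p : (levelGraph n k).Walk A A', p.length = 2 := by
  obtain ⟨C, A', hAC, hC, hA'C, hA', hcard⟩ :=
    exists_superset_subset_card_sdiff_le (A := A.1) (B := B.1) (m := n - k)
      (by omega) (by omega) (by simp only [Fintype.card_fin]; omega)
  rw [hA] at hA' hcard
  let C' : LevelVert n k := ⟨C, Or.inr hC⟩
  let A'' : LevelVert n k := ⟨A', Or.inl hA'⟩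
  have h₁ : (levelGraph n k).Adj A C' := levelGraph_adj_of_subset hk hA hC hAC
  have h₂ : (levelGraph n k).Adj C' A'' := (levelGraph_adj_of_subset hk hA' hC hA'C).symm
  exact ⟨A'', hA', hcard.trans_eq (by omega), h₁.toWalk.append h₂.toWalk, rfl⟩

theorem levelGraph_exists_walk_length_le (hk : k < n - k) (q : ℕ) :
    ∀ A B : LevelVert n k, #A.1 = k → #B.1 = k → #(B.1 \ A.1) ≤ q * (n - 2 * k) →
      ∃ p : (levelGraph n k).Walk A B, p.length ≤ 2 * q := by
  induction q with
  | zero =>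
    intro A B hA hB hcard
    have hBA : B.1 ⊆ A.1 := sdiff_eq_empty_iff_subset.1 (card_eq_zero.1 (by omega))
    obtain rfl : B = A := Subtype.ext (eq_of_subset_of_card_le hBA (by omega))
    exact ⟨.nil, by simp⟩
  | succ q ih =>
    intro A B hA hB hBA
    obtain ⟨A', hA', hcard, p, hp⟩ := levelGraph_exists_walk_two hk B hA hB
    obtain ⟨p', hp'⟩ := ih A' B hA' hB (by rw [Nat.succ_mul] at hBA; omega)
    exact ⟨p.append p', by rw [SimpleGraph.Walk.length_append]; omega⟩

end LevelGraph

theorem dist_le_of_card_eq_lower (n k i : ℕ) (hk : k < n - k)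
    (A B : LevelVert n k) (hA : A.1.card = k) (hB : B.1.card = k)
    (hi : (A.1 ∩ B.1).card = i) :
    (levelGraph n k).dist A B ≤ 2 * ((k - i + (n - 2 * k) - 1) / (n - 2 * k)) := by
  have hBA : #(B.1 \ A.1) = k - i := by
    have := card_inter_add_card_sdiff B.1 A.1
    rw [inter_comm] at this
    omega
  have hceil : k - i ≤ (k - i + (n - 2 * k) - 1) / (n - 2 * k) * (n - 2 * k) := by
    have := Nat.lt_div_mul_add (a := k - i + (n - 2 * k) - 1) (b := n - 2 * k) (by omega)
    omega
  obtain ⟨p, hp⟩ := levelGraph_exists_walk_length_le hk _ A B hA hB (by rwa [hBA])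
  exact (SimpleGraph.dist_le p).trans hp
end

section
/- The graph L_{k,n} (with k < n - k) is connected. -/
open Finset

namespace Finset

variable {α : Type*} [DecidableEq α] {s t : Finset α} {a b : α}

theorem card_insert_erase (ha : a ∉ s) (hb : b ∈ s) : #(insert a (s.erase b)) = #s := by
  rw [card_insert_of_notMem (fun h => ha (mem_of_mem_erase h)), card_erase_add_one hb]

theorem sdiff_insert_erase (hb : b ∉ t) : t \ insert a (s.erase b) = (t \ s).erase a := by
  grind

theorem union_insert_erase_subset : s ∪ insert a (s.erase b) ⊆ insert a s :=
  union_subset (subset_insert a s) (insert_subset_insert a (erase_subset b s))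

end Finset

namespace LevelVert

variable {n k : ℕ}

def lower (A : Finset (Fin n)) (hA : #A = k) : LevelVert n k := ⟨A, Or.inl hA⟩

def upper (B : Finset (Fin n)) (hB : #B = n - k) : LevelVert n k := ⟨B, Or.inr hB⟩

end LevelVert

namespace levelGraph

open LevelVert

variable {n k : ℕ} {A A' B : Finset (Fin n)}

theorem adj_lower_upper (hkn : k ≠ n - k) (hA : #A = k) (hB : #B = n - k) (hAB : A ⊆ B) :
    (levelGraph n k).Adj (lower A hA) (upper B hB) := by
  refine ⟨fun h => hkn ?_, Or.inl ⟨hA, hB, hAB⟩⟩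
  rw [← hB, ← hA]
  exact congrArg (fun v : LevelVert n k => #v.1) h

theorem exists_reachable_lower (hkn : k < n - k) (v : LevelVert n k) :
    ∃ (A : Finset (Fin n)) (hA : #A = k), (levelGraph n k).Reachable (lower A hA) v := by
  obtain ⟨B, hB | hB⟩ := v
  · exact ⟨B, hB, .rfl⟩
  · obtain ⟨A, hAB, hA⟩ := exists_subset_card_eq (hB ▸ hkn.le)
    exact ⟨A, hA, (adj_lower_upper hkn.ne hA hB hAB).reachable⟩

theorem reachable_lower_of_card_union_le (hkn : k ≠ n - k) (hA : #A = k) (hA' : #A' = k)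
    (hunion : #(A ∪ A') ≤ n - k) :
    (levelGraph n k).Reachable (lower A hA) (lower A' hA') := by
  obtain ⟨B, hsub, hB⟩ := exists_superset_card_eq hunion (by simp)
  exact (adj_lower_upper hkn hA hB (subset_union_left.trans hsub)).reachable.trans
    (adj_lower_upper hkn hA' hB (subset_union_right.trans hsub)).reachable.symm

theorem reachable_lower_lower (hkn : k + 1 ≤ n - k) (hA : #A = k) (hA' : #A' = k) :
    (levelGraph n k).Reachable (lower A hA) (lower A' hA') := by
  induction hd : #(A' \ A) generalizing A with
  | zero =>
    obtain rfl : A' = A :=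
      eq_of_subset_of_card_le (sdiff_eq_empty_iff_subset.mp (card_eq_zero.mp hd)) (by omega)
    exact .rfl
  | succ d ih =>
    obtain ⟨a, ha⟩ := card_pos.mp (by omega : 0 < #(A' \ A))
    obtain ⟨b, hb⟩ := card_pos.mp (by rw [card_sdiff_comm (hA.trans hA'.symm)]; omega)
    have haA := (mem_sdiff.mp ha).2
    have hA'' : #(insert a (A.erase b)) = k := (card_insert_erase haA (mem_sdiff.mp hb).1).trans hA
    have hunion : #(A ∪ insert a (A.erase b)) ≤ n - k :=
      calc #(A ∪ insert a (A.erase b)) ≤ #(insert a A) := card_le_card union_insert_erase_subset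
        _ = k + 1 := by rw [card_insert_of_notMem haA, hA]
        _ ≤ n - k := hkn
    refine (reachable_lower_of_card_union_le (by omega) hA hA'' hunion).trans (ih hA'' ?_)
    rw [sdiff_insert_erase (mem_sdiff.mp hb).2, card_erase_of_mem ha, hd, Nat.add_sub_cancel]

end levelGraph

theorem levelGraph_connected_general (n k : ℕ) (ht : 0 < n - 2 * k) :
    (levelGraph n k).Connected := by
  have hkn : k + 1 ≤ n - k := by omega
  have hP : #(Pset n k) = k := by rw [Pset, Fin.card_filter_val_lt]; omega
  refine (SimpleGraph.connected_iff_exists_forall_reachable _).mpr ⟨.lower _ hP, fun v => ?_⟩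
  obtain ⟨A, hA, hAv⟩ := levelGraph.exists_reachable_lower hkn v
  exact (levelGraph.reachable_lower_lower hkn hP hA).trans hAv

theorem levelGraph_connected (n k : ℕ) (ht : 0 < n - 2 * k) (hk : 0 < k) :
    (levelGraph n k).Connected :=
  levelGraph_connected_general n k ht
end

section
/- Let t = n - 2k > 0, s = ⌈k/t⌉, P = {1,…,k}, and for 0 ≤ i ≤ s let Γ(i) = {A ∈ [X]^k : d(P,A) = 2i} where d is graph distance in L_{k,n}. Then |Γ(i)| = Σ_{j=1}^{t} C(k, k - ((i-1)t + j))·C(n-k, (i-1)t + j), where binomial coefficients with out-of-range arguments are 0. -/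
/-- Extended binomial coefficient: C(a,b) = 0 for b < 0 (and for b > a, via Nat.choose). -/
def C (a : ℕ) (b : ℤ) : ℕ := if 0 ≤ b then a.choose b.toNat else 0

open Finset SimpleGraph
open scoped symmDiff

namespace Finset

variable {α : Type*} [DecidableEq α]

theorem card_symmDiff (s t : Finset α) : #(s ∆ t) = #(s \ t) + #(t \ s) := by
  rw [symmDiff_def, sup_eq_union, card_union_of_disjoint disjoint_sdiff_sdiff]

theorem card_symmDiff_le (s t u : Finset α) : #(s ∆ u) ≤ #(s ∆ t) + #(t ∆ u) :=
  (card_le_card (symmDiff_triangle s t u)).trans (card_union_le _ _)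

theorem sdiff_sdiff_union_of_disjoint {U D E : Finset α} (hD : D ⊆ U) (hE : Disjoint U E) :
    U \ (U \ D ∪ E) = D := by
  grind [disjoint_left]

theorem union_sdiff_of_disjoint {U D E : Finset α} (hE : Disjoint U E) :
    (U \ D ∪ E) \ U = E := by
  grind [disjoint_left]

theorem card_sdiff_union_of_disjoint {U D E : Finset α} (hD : D ⊆ U) (hE : Disjoint U E) :
    #(U \ D ∪ E) = #U - #D + #E := by
  rw [card_union_of_disjoint (disjoint_of_subset_left sdiff_subset hE), card_sdiff_of_subset hD]

theorem exists_card_sdiff_eq {U V : Finset α} (h : #U = #V) {s : ℕ} (hs : s ≤ #(U \ V)) :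
    ∃ U', #U' = #U ∧ #(U \ U') = s ∧ #(U' \ V) = #(U \ V) - s := by
  obtain ⟨S, hSUV, rfl⟩ := exists_subset_card_eq hs
  obtain ⟨T, hTVU, hT⟩ := exists_subset_card_eq (hs.trans_eq (card_sdiff_comm h))
  have hSU : S ⊆ U := hSUV.trans sdiff_subset
  have hUT : Disjoint U T := disjoint_of_subset_right hTVU disjoint_sdiff
  refine ⟨U \ S ∪ T, ?_, by rw [sdiff_sdiff_union_of_disjoint hSU hUT], ?_⟩
  · have := card_le_card hSU
    rw [card_sdiff_union_of_disjoint hSU hUT, hT]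
    omega
  · rw [show (U \ S ∪ T) \ V = (U \ V) \ S by grind, card_sdiff_of_subset hSUV]

theorem card_filter_card_sdiff_eq [Fintype α] (P : Finset α) (m : ℕ) :
    #{B : Finset α | #B = #P ∧ #(P \ B) = m} =
      (#P).choose m * (Fintype.card α - #P).choose m := by
  rw [← card_compl, ← card_powersetCard, ← card_powersetCard, ← card_product]
  refine card_nbij' (fun B ↦ (P \ B, B \ P)) (fun DE ↦ P \ DE.1 ∪ DE.2) ?_ ?_ ?_ ?_ <;>
    simp only [Set.MapsTo, Set.LeftInvOn, Set.RightInvOn, mem_coe, mem_filter, mem_univ, true_and,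
      Prod.forall, mem_product, mem_powersetCard, subset_compl_iff_disjoint_left]
  · rintro B ⟨hB, rfl⟩
    exact ⟨⟨sdiff_subset, rfl⟩, disjoint_sdiff, card_sdiff_comm hB⟩
  · rintro D E ⟨⟨hDP, rfl⟩, hPE, hE⟩
    rw [card_sdiff_union_of_disjoint hDP hPE, sdiff_sdiff_union_of_disjoint hDP hPE]
    have := card_le_card hDP
    omega
  · grind
  · rintro D E ⟨⟨hDP, -⟩, hPE, -⟩
    rw [sdiff_sdiff_union_of_disjoint hDP hPE, union_sdiff_of_disjoint hPE]

end Finset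

theorem Nat.ceilDiv_eq_iff_exists {m t : ℕ} (ht : 0 < t) (i : ℕ) :
    m ⌈/⌉ t = i ↔ ∃ j ∈ Icc 1 t, (m : ℤ) = (i - 1) * t + j := by
  have hit : ((i : ℤ) - 1) * t = (i * t : ℕ) - t := by push_cast; ring
  rw [Nat.ceilDiv_eq_add_pred_div, Nat.div_eq_iff ht, hit]
  generalize i * t = p
  constructor
  · intro h
    exact ⟨m + t - p, mem_Icc.2 (by omega), by omega⟩
  · rintro ⟨j, hj, hm⟩
    rw [mem_Icc] at hj
    omega

theorem C_natCast (a m : ℕ) : C a m = a.choose m := by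
  simp [C]

theorem C_sub_natCast (a m : ℕ) : C a (a - m) = a.choose m := by
  rcases le_or_gt m a with h | h
  · rw [← Nat.choose_symm h, ← C_natCast]
    congr
    omega
  · rw [C, if_neg (by omega), Nat.choose_eq_zero_of_lt h]

theorem card_filter_intCast_card_sdiff_eq {α : Type*} [DecidableEq α] [Fintype α]
    (P : Finset α) (z : ℤ) :
    #{B : Finset α | #B = #P ∧ (#(P \ B) : ℤ) = z} =
      C #P (#P - z) * C (Fintype.card α - #P) z := by
  rcases lt_or_ge z 0 with hz | hz
  · have hC : C (Fintype.card α - #P) z = 0 := if_neg hz.not_ge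
    rw [hC, mul_zero, card_eq_zero, filter_eq_empty_iff]
    intro B _ hB
    omega
  · lift z to ℕ using hz
    simp only [Nat.cast_inj, C_natCast, C_sub_natCast, card_filter_card_sdiff_eq]

theorem card_filter_ceilDiv_card_sdiff_eq {α : Type*} [DecidableEq α] [Fintype α]
    (P : Finset α) {t : ℕ} (ht : 0 < t) (i : ℕ) :
    #{B : Finset α | #B = #P ∧ #(P \ B) ⌈/⌉ t = i} =
      ∑ j ∈ Icc 1 t, C #P (#P - (((i : ℤ) - 1) * t + j)) *
        C (Fintype.card α - #P) (((i : ℤ) - 1) * t + j) := by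
  calc #{B : Finset α | #B = #P ∧ #(P \ B) ⌈/⌉ t = i}
      = #((Icc 1 t).biUnion fun j : ℕ ↦
          {B : Finset α | #B = #P ∧ (#(P \ B) : ℤ) = (i - 1) * t + j}) := by
        congr 1
        ext B
        simp [Nat.ceilDiv_eq_iff_exists ht, and_left_comm]
    _ = _ := by
        rw [card_biUnion]
        · exact sum_congr rfl fun j _ ↦ card_filter_intCast_card_sdiff_eq P _
        · intro j₁ _ j₂ _ hj
          simp only [Function.onFun, Finset.disjoint_left, mem_filter]
          omega

theorem card_Pset {n k : ℕ} (hkn : k ≤ n) : #(Pset n k) = k := by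
  rw [Pset, Fin.card_filter_val_lt, min_eq_right hkn]

section LevelGraph

variable {n k : ℕ}

theorem levelGraph_card_symmDiff_of_adj (hkn : k ≤ n - k) {u v : LevelVert n k}
    (h : (levelGraph n k).Adj u v) : #(u.1 ∆ v.1) = n - 2 * k := by
  rcases h.2 with ⟨hu, hv, huv⟩ | ⟨hv, hu, hvu⟩
  · rw [symmDiff_of_le huv, card_sdiff_of_subset huv]
    omega
  · rw [symmDiff_comm, symmDiff_of_le hvu, card_sdiff_of_subset hvu]
    omega

theorem levelGraph_card_symmDiff_le_mul_length (hkn : k ≤ n - k) :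
    ∀ {u v : LevelVert n k} (W : (levelGraph n k).Walk u v),
      #(u.1 ∆ v.1) ≤ (n - 2 * k) * W.length
  | _, _, .nil => by simp
  | u, v, .cons (v := w) h W => calc
      #(u.1 ∆ v.1) ≤ #(u.1 ∆ w.1) + #(w.1 ∆ v.1) := card_symmDiff_le _ _ _
      _ ≤ (n - 2 * k) + (n - 2 * k) * W.length := by
        rw [levelGraph_card_symmDiff_of_adj hkn h]
        exact Nat.add_le_add_left (levelGraph_card_symmDiff_le_mul_length hkn W) _
      _ = (n - 2 * k) * (W.cons h).length := by
        rw [Walk.length_cons]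
        ring

def levelGraphColoring (hkn : k ≠ n - k) : (levelGraph n k).Coloring Bool :=
  Coloring.mk (fun A ↦ decide (#A.1 = k)) fun {u v} h ↦ by
    rcases h.2 with ⟨hu, hv, -⟩ | ⟨hv, hu, -⟩ <;> simp [hu, hv, hkn.symm]

theorem levelGraph_even_length (hkn : k ≠ n - k) {u v : LevelVert n k}
    (W : (levelGraph n k).Walk u v) (hu : #u.1 = k) (hv : #v.1 = k) : Even W.length :=
  ((levelGraphColoring hkn).even_length_iff_congr W).2
    (by simp [levelGraphColoring, Coloring.mk, hu, hv])

theorem levelGraph_two_mul_ceilDiv_le_length (hkn : k < n - k) {U V : LevelVert n k}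
    (hU : #U.1 = k) (hV : #V.1 = k) (W : (levelGraph n k).Walk U V) :
    2 * (#(U.1 \ V.1) ⌈/⌉ (n - 2 * k)) ≤ W.length := by
  obtain ⟨q, hq⟩ := levelGraph_even_length hkn.ne W hU hV
  have hsymm := levelGraph_card_symmDiff_le_mul_length hkn.le W
  rw [card_symmDiff, card_sdiff_comm (hV.trans hU.symm), hq, mul_add] at hsymm
  rw [hq, ← two_mul]
  exact Nat.mul_le_mul_left 2 ((ceilDiv_le_iff_le_mul (by omega)).2 (by omega))

theorem levelGraph_adj_of_subset_s14 (hkn : k < n - k) {A B : LevelVert n k} (hA : #A.1 = k)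
    (hB : #B.1 = n - k) (h : A.1 ⊆ B.1) : (levelGraph n k).Adj A B :=
  ⟨fun e ↦ by rw [e] at hA; omega, Or.inl ⟨hA, hB, h⟩⟩

theorem levelGraph_exists_adj_adj (hkn : k < n - k) {U V : LevelVert n k}
    (hU : #U.1 = k) (hV : #V.1 = k) (h : #(U.1 \ V.1) ≤ n - 2 * k) :
    ∃ B, (levelGraph n k).Adj U B ∧ (levelGraph n k).Adj B V := by
  have hUV : #(U.1 ∪ V.1) ≤ n - k := by
    rw [← card_sdiff_add_card]
    omega
  obtain ⟨B, hUVB, hB⟩ := exists_superset_card_eq hUV (by simp)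
  exact ⟨⟨B, Or.inr hB⟩, levelGraph_adj_of_subset_s14 hkn hU hB (subset_union_left.trans hUVB),
    (levelGraph_adj_of_subset_s14 hkn hV hB (subset_union_right.trans hUVB)).symm⟩

theorem levelGraph_exists_walk_length_le_s14 (hkn : k < n - k) {V : LevelVert n k} (hV : #V.1 = k)
    (q : ℕ) : ∀ U : LevelVert n k, #U.1 = k → #(U.1 \ V.1) ≤ (n - 2 * k) * q →
      ∃ W : (levelGraph n k).Walk U V, W.length ≤ 2 * q := by
  induction q with
  | zero =>
    intro U hU h
    have hUV : U.1 ⊆ V.1 := sdiff_eq_empty_iff_subset.1 (card_eq_zero.1 (by simpa using h))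
    obtain rfl : U = V := Subtype.ext (eq_of_subset_of_card_le hUV (by rw [hU, hV]))
    exact ⟨.nil, le_rfl⟩
  | succ q ih =>
    intro U hU h
    obtain ⟨A, hA, hUA, hAV⟩ :=
      exists_card_sdiff_eq (hU.trans hV.symm) (min_le_left #(U.1 \ V.1) (n - 2 * k))
    let U' : LevelVert n k := ⟨A, Or.inl (hA.trans hU)⟩
    obtain ⟨B, hUB, hBU'⟩ :=
      levelGraph_exists_adj_adj hkn (V := U') hU (hA.trans hU) (hUA.trans_le (min_le_right _ _))
    obtain ⟨W, hW⟩ := ih U' (hA.trans hU) (by rw [hAV]; rw [mul_add_one] at h; omega)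
    exact ⟨.cons hUB (.cons hBU' W), by simp only [Walk.length_cons]; omega⟩

theorem levelGraph_dist_eq (hkn : k < n - k) {U V : LevelVert n k}
    (hU : #U.1 = k) (hV : #V.1 = k) :
    (levelGraph n k).dist U V = 2 * (#(U.1 \ V.1) ⌈/⌉ (n - 2 * k)) := by
  obtain ⟨W, hW⟩ := levelGraph_exists_walk_length_le_s14 hkn hV _ U hU
    ((ceilDiv_le_iff_le_mul (by omega)).1 le_rfl)
  obtain ⟨W', hW'⟩ := Reachable.exists_walk_length_eq_dist ⟨W⟩
  exact le_antisymm ((dist_le W).trans hW)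
    (hW' ▸ levelGraph_two_mul_ceilDiv_le_length hkn hU hV W')

end LevelGraph

theorem levelVert_natCard_subtype {n k : ℕ} (p : Finset (Fin n) → Prop) [DecidablePred p] :
    Nat.card {A : LevelVert n k // #A.1 = k ∧ p A.1} =
      #{B : Finset (Fin n) | #B = k ∧ p B} := by
  rw [← Fintype.card_subtype, ← Nat.card_eq_fintype_card]
  exact Nat.card_congr (Equiv.subtypeSubtypeEquivSubtype (p := fun B ↦ #B = k ∨ #B = n - k)
    (q := fun B ↦ #B = k ∧ p B) fun h ↦ Or.inl h.1)

theorem card_Gamma_general (n k : ℕ) (hkn : k < n - k)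
    (P : LevelVert n k) (hP : P.1 = Pset n k)
    (i : ℕ) :
    Nat.card {A : LevelVert n k //
        A.1.card = k ∧ (levelGraph n k).dist P A = 2 * i} =
      ∑ j ∈ Finset.Icc 1 (n - 2 * k),
        C k ((k : ℤ) - (((i : ℤ) - 1) * (n - 2 * k) + j)) *
        C (n - k) (((i : ℤ) - 1) * (n - 2 * k) + j) := by
  have ht : 0 < n - 2 * k := by omega
  have hPk : #(Pset n k) = k := card_Pset (by omega)
  have hPA (A : LevelVert n k) :
      (#A.1 = k ∧ (levelGraph n k).dist P A = 2 * i) ↔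
        (#A.1 = k ∧ #(Pset n k \ A.1) ⌈/⌉ (n - 2 * k) = i) := by
    refine and_congr_right fun hA ↦ ?_
    rw [levelGraph_dist_eq hkn (hP ▸ hPk) hA, hP]
    omega
  have hcount := card_filter_ceilDiv_card_sdiff_eq (Pset n k) ht i
  rw [hPk, Fintype.card_fin] at hcount
  rw [show ((n : ℤ) - 2 * k) = (n - 2 * k : ℕ) by omega,
    Nat.card_congr (Equiv.subtypeEquivRight hPA)]
  exact (levelVert_natCard_subtype _).trans hcount

theorem card_Gamma (n k : ℕ) (hk : 0 < k) (hkn : k < n - k)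
    (P : LevelVert n k) (hP : P.1 = Pset n k)
    (i : ℕ) (hi : i ≤ (k + (n - 2 * k) - 1) / (n - 2 * k)) :
    Nat.card {A : LevelVert n k //
        A.1.card = k ∧ (levelGraph n k).dist P A = 2 * i} =
      ∑ j ∈ Finset.Icc 1 (n - 2 * k),
        C k ((k : ℤ) - (((i : ℤ) - 1) * (n - 2 * k) + j)) *
        C (n - k) (((i : ℤ) - 1) * (n - 2 * k) + j) :=
  card_Gamma_general n k hkn P hP i
end
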